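/- arXiv:1207.6045 — 3 statements merged into one kernel-verified Lean document; each statement's English description precedes it below -/
import Mathlib

section
/- Let X be a real-valued random variable (not necessarily continuous) with CDF F, define the modified distribution function F(x, λ) = P(X < x) + λ·P(X = x), and let V be a random variable uniformly distributed on [0,1] and independent of X. Then the random variable Y = F(X, V) is uniformly distributed on [0,1]. -/
/-!
For `0 < u < 1` let `x₀` be the `u`-quantile of the law of `X`, i.e. the least `x` with
`P(X ≤ x) ≥ u`; it exists by right-continuity of the distribution function. Then `F(X, V) < u`
holds surely when `X < x₀`, never when `X > x₀`, and when `X = x₀` exactly for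
`V < (u - P(X < x₀)) / P(X = x₀)`. Summing, `P(F(X, V) < u) = P(X < x₀) + (u - P(X < x₀)) = u`.
-/

open MeasureTheory ProbabilityTheory

/-- The uniform probability measure on the interval `[0,1]`. -/
noncomputable def uniform01 : Measure ℝ := volume.restrict (Set.Icc 0 1)

open Set Filter Topology
open scoped ENNReal

instance : IsProbabilityMeasure uniform01 :=
  ⟨by simp [uniform01, Real.volume_Icc]⟩

lemma uniform01_eq_restrict_Ico : uniform01 = volume.restrict (Ico 0 1) :=
  Measure.restrict_congr_set Ico_ae_eq_Icc.symm

lemma uniform01_Iio (u : ℝ) : uniform01 (Iio u) = ENNReal.ofReal (min u 1) := by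
  rw [uniform01_eq_restrict_Ico, Measure.restrict_apply measurableSet_Iio, inter_comm,
    Ico_inter_Iio, Real.volume_Ico, sub_zero, min_comm]

section AffineSublevel

variable {c m u : ℝ}

lemma uniform01_setOf_add_mul_lt_of_add_lt (hm : 0 ≤ m) (h : c + m < u) :
    uniform01 {t | c + t * m < u} = 1 := by
  rw [uniform01, Measure.restrict_apply_superset, Real.volume_Icc, sub_zero, ENNReal.ofReal_one]
  intro t ht
  have : t * m ≤ m := mul_le_of_le_one_left hm ht.2
  simp only [mem_ofPred_eq]
  linarith

lemma uniform01_setOf_add_mul_lt_of_le (hm : 0 ≤ m) (h : u ≤ c) :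
    uniform01 {t | c + t * m < u} = 0 := by
  rw [uniform01_eq_restrict_Ico, Measure.restrict_apply' measurableSet_Ico]
  convert measure_empty (μ := volume)
  refine eq_empty_of_forall_notMem fun t ⟨ht, ht0, _⟩ => ?_
  have : 0 ≤ t * m := mul_nonneg ht0 hm
  simp only [mem_ofPred_eq] at ht
  linarith

lemma ofReal_mul_uniform01_setOf_add_mul_lt (hm : 0 ≤ m) (hcu : c ≤ u) (hum : u ≤ c + m) :
    ENNReal.ofReal m * uniform01 {t | c + t * m < u} = ENNReal.ofReal (u - c) := by
  rcases hm.eq_or_lt with rfl | hm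
  · simp [show u - c = 0 by linarith]
  have hset : {t | c + t * m < u} = Iio ((u - c) / m) := by
    ext t
    simp only [mem_ofPred_eq, mem_Iio, lt_div_iff₀ hm]
    constructor <;> intro <;> linarith
  have hle : (u - c) / m ≤ 1 := (div_le_one hm).2 (by linarith)
  rw [hset, uniform01_Iio, min_eq_left hle, ← ENNReal.ofReal_mul hm.le, mul_div_cancel₀ _ hm.ne']

end AffineSublevel

lemma MeasureTheory.Measure.ext_of_Iio_of_isProbabilityMeasure (μ ν : Measure ℝ)
    [IsProbabilityMeasure μ] [IsProbabilityMeasure ν] (h : ∀ u, μ (Iio u) = ν (Iio u)) :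
    μ = ν := by
  refine ext_of_generate_finite (range Iio) ?_ isPiSystem_Iio ?_ (by simp)
  · rw [BorelSpace.measurable_eq (α := ℝ), borel_eq_generateFrom_Iio]
  · rintro _ ⟨u, rfl⟩
    exact h u

lemma StieltjesFunction.exists_le_apply_iff_le (f : StieltjesFunction ℝ) {u : ℝ}
    (hle : ∃ x, u ≤ f x) (hlt : ∃ x, f x < u) : ∃ x₀, ∀ x, u ≤ f x ↔ x₀ ≤ x := by
  set A := {x | u ≤ f x}
  obtain ⟨y, hy⟩ := hlt
  have hbdd : BddBelow A :=
    ⟨y, fun x hx => le_of_not_gt fun hxy => (hx.trans (f.mono hxy.le)).not_gt hy⟩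
  have hgt : ∀ x, sInf A < x → u ≤ f x := fun x hx => by
    obtain ⟨z, hzA, hzx⟩ := (csInf_lt_iff hbdd hle).1 hx
    exact hzA.trans (f.mono hzx.le)
  have hmem : u ≤ f (sInf A) :=
    ge_of_tendsto ((f.right_continuous _).mono Ioi_subset_Ici_self)
      (eventually_nhdsWithin_of_forall hgt)
  exact ⟨sInf A, fun x => ⟨fun hx => csInf_le hbdd hx, fun hx => hmem.trans (f.mono hx)⟩⟩

noncomputable def gdt (μ : Measure ℝ) (x t : ℝ) : ℝ := μ.real (Iio x) + t * μ.real {x}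

section DistributionFunction

variable (μ : Measure ℝ) [IsProbabilityMeasure μ]

lemma measureReal_Iio_add_measureReal_singleton (x : ℝ) :
    μ.real (Iio x) + μ.real {x} = cdf μ x := by
  rw [cdf_eq_real, ← Iio_union_right, measureReal_union (by simp) (measurableSet_singleton x)]

lemma measureReal_Iio_eq_leftLim_cdf (x : ℝ) : μ.real (Iio x) = Function.leftLim (cdf μ) x := by
  have h := (cdf μ).measure_Iio (tendsto_cdf_atBot μ) x
  rw [measure_cdf, sub_zero] at h
  rw [measureReal_def, h, ENNReal.toReal_ofReal]
  exact (cdf_nonneg μ _).trans ((cdf μ).mono.le_leftLim (sub_one_lt x))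

lemma measurable_gdt : Measurable (Function.uncurry (gdt μ)) := by
  have hIio : Monotone fun x => μ.real (Iio x) := fun _ _ hxy =>
    measureReal_mono (Iio_subset_Iio hxy)
  have hsingleton : (fun x => μ.real {x}) = fun x => cdf μ x - μ.real (Iio x) := by
    funext x
    rw [← measureReal_Iio_add_measureReal_singleton, add_sub_cancel_left]
  have hmeas : Measurable fun x => μ.real {x} := by
    rw [hsingleton]
    exact (cdf μ).mono.measurable.sub hIio.measurable
  exact (hIio.measurable.comp measurable_fst).add (measurable_snd.mul (hmeas.comp measurable_fst))

lemma lintegral_uniform01_gdt_lt {u x₀ : ℝ} (hx₀ : ∀ x, u ≤ cdf μ x ↔ x₀ ≤ x) :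
    ∫⁻ x, uniform01 {t | gdt μ x t < u} ∂μ = ENNReal.ofReal u := by
  have hcdf_lt (x : ℝ) (hx : x < x₀) : cdf μ x < u := not_le.1 fun h => hx.not_ge ((hx₀ x).1 h)
  have hc : μ.real (Iio x₀) ≤ u := by
    rw [measureReal_Iio_eq_leftLim_cdf]
    exact le_of_tendsto ((cdf μ).mono.tendsto_leftLim x₀)
      (eventually_nhdsWithin_of_forall fun x hx => (hcdf_lt x hx).le)
  have hu : u ≤ μ.real (Iio x₀) + μ.real {x₀} := by
    rw [measureReal_Iio_add_measureReal_singleton]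
    exact (hx₀ x₀).2 le_rfl
  have hsplit : (fun x => uniform01 {t | gdt μ x t < u}) =
      fun x => (Iio x₀).indicator 1 x +
        ({x₀} : Set ℝ).indicator (fun _ => uniform01 {t | gdt μ x₀ t < u}) x := by
    funext x
    rcases lt_trichotomy x x₀ with hx | rfl | hx
    · have hlt := hcdf_lt x hx
      rw [← measureReal_Iio_add_measureReal_singleton] at hlt
      simp [hx, hx.ne, gdt, uniform01_setOf_add_mul_lt_of_add_lt measureReal_nonneg hlt]
    · simp
    · have hle : u ≤ μ.real (Iio x) := by
        refine hu.trans ?_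
        rw [measureReal_Iio_add_measureReal_singleton, cdf_eq_real]
        exact measureReal_mono (Iic_subset_Iio.2 hx)
      simp [hx.ne', not_lt.2 hx.le, gdt, uniform01_setOf_add_mul_lt_of_le measureReal_nonneg hle]
  rw [hsplit, lintegral_add_left (measurable_one.indicator measurableSet_Iio),
    lintegral_indicator_one measurableSet_Iio,
    lintegral_indicator_const (measurableSet_singleton _), mul_comm, ← ofReal_measureReal (s := Iio x₀), ← ofReal_measureReal (s := {x₀})]
  have hatom : ENNReal.ofReal (μ.real {x₀}) * uniform01 {t | gdt μ x₀ t < u} =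
      ENNReal.ofReal (u - μ.real (Iio x₀)) :=
    ofReal_mul_uniform01_setOf_add_mul_lt measureReal_nonneg hc hu
  rw [hatom, ← ENNReal.ofReal_add measureReal_nonneg (sub_nonneg.2 hc), add_sub_cancel]

theorem map_prod_uniform01_gdt :
    (μ.prod uniform01).map (Function.uncurry (gdt μ)) = uniform01 := by
  have := Measure.isProbabilityMeasure_map (μ := μ.prod uniform01) (measurable_gdt μ).aemeasurable
  refine Measure.ext_of_Iio_of_isProbabilityMeasure _ _ fun u => ?_
  rw [Measure.map_apply (measurable_gdt μ) measurableSet_Iio,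
    Measure.prod_apply (measurable_gdt μ measurableSet_Iio), uniform01_Iio]
  change ∫⁻ x, uniform01 {t | gdt μ x t < u} ∂μ = _
  rcases le_or_gt u 0 with hu | hu
  · have hzero (x : ℝ) : uniform01 {t | gdt μ x t < u} = 0 :=
      uniform01_setOf_add_mul_lt_of_le measureReal_nonneg (hu.trans measureReal_nonneg)
    simp [hzero, ENNReal.ofReal_of_nonpos (min_le_of_left_le hu)]
  by_cases hreach : ∃ x, u ≤ cdf μ x
  · have hbelow : ∃ x, cdf μ x < u := ((tendsto_cdf_atBot μ).eventually (gt_mem_nhds hu)).exists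
    obtain ⟨x₀, hx₀⟩ := (cdf μ).exists_le_apply_iff_le hreach hbelow
    have hu1 : u ≤ 1 := ((hx₀ x₀).2 le_rfl).trans (cdf_le_one μ x₀)
    rw [lintegral_uniform01_gdt_lt μ hx₀, min_eq_left hu1]
  · simp only [not_exists, not_le] at hreach
    have hone (x : ℝ) : uniform01 {t | gdt μ x t < u} = 1 := by
      refine uniform01_setOf_add_mul_lt_of_add_lt measureReal_nonneg ?_
      rw [measureReal_Iio_add_measureReal_singleton]
      exact hreach x
    have hu1 : 1 ≤ u := le_of_tendsto' (tendsto_cdf_atTop μ) fun x => (hreach x).le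
    simp [hone, min_eq_right hu1]

end DistributionFunction

/-- **Generalized Distributional Transform.**
Let `X` be a real-valued random variable (not necessarily continuous), define the modified
distribution function `F(x, λ) = P(X < x) + λ·P(X = x)`, and let `V` be uniform on `[0,1]`
and independent of `X`. Then `Y = F(X, V)` is uniformly distributed on `[0,1]`. -/
theorem gdt_uniform {Ω : Type*} [MeasurableSpace Ω] (P : Measure Ω) [IsProbabilityMeasure P]
    (X V : Ω → ℝ) (hX : Measurable X) (hV : Measurable V)
    (hVunif : P.map V = uniform01)
    (hindep : IndepFun X V P)
    (F : ℝ → ℝ → ℝ)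
    (hF : ∀ x lam, F x lam = (P.map X (Set.Iio x)).toReal + lam * (P.map X {x}).toReal) :
    P.map (fun ω => F (X ω) (V ω)) = uniform01 := by
  have := Measure.isProbabilityMeasure_map (μ := P) hX.aemeasurable
  obtain rfl : F = gdt (P.map X) := funext₂ hF
  have hjoint : P.map (fun ω => (X ω, V ω)) = (P.map X).prod uniform01 := by
    rw [← hVunif]
    exact (indepFun_iff_map_prod_eq_prod_map_map hX.aemeasurable hV.aemeasurable).1 hindep
  rw [← map_prod_uniform01_gdt (P.map X), ← hjoint,
    Measure.map_map (measurable_gdt _) (hX.prodMk hV)]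
  rfl
end

section
/- Let n ≥ 2 and let μ be any probability measure on [0,1] × [0,1] whose two marginals are both the uniform distribution on [0,1]. Then ∫ x·(1−z)^{n−1} dμ(x,z) ≥ 1/(n + n²), with equality when μ is the law of (X, X) for X uniform on [0,1]. -/
open MeasureTheory ProbabilityTheory

/-!
Write `n = k + 1`. Convexity of `t ↦ t ^ n`, through its tangent at `1 - z`, gives the pointwise
bound `x (1 - z)^k ≥ z (1 - z)^k + ((1 - z)^n - (1 - x)^n) / n` on `[0,1]²`. Integrating against a
coupling `μ` of the uniform law with itself, the two `(1 - ·)^n` terms have the same integral, so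
`∫ x (1 - z)^k dμ ≥ ∫₀¹ z (1 - z)^k dz = 1 / (n (n + 1))`, the value of the diagonal coupling.
-/

open Set

theorem pow_succ_sub_pow_succ_le {a b : ℝ} (ha : 0 ≤ a) (hb : 0 ≤ b) (k : ℕ) :
    b ^ (k + 1) - a ^ (k + 1) ≤ (k + 1) * b ^ k * (b - a) := by
  induction k with
  | zero => simp
  | succ k ih =>
    have hmono : 0 ≤ (b ^ (k + 1) - a ^ (k + 1)) * (b - a) := by
      rcases le_total a b with hab | hab
      · exact mul_nonneg (sub_nonneg.2 (pow_le_pow_left₀ ha hab _)) (sub_nonneg.2 hab)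
      · exact mul_nonneg_of_nonpos_of_nonpos (sub_nonpos.2 (pow_le_pow_left₀ hb hab _))
          (sub_nonpos.2 hab)
    push_cast
    linear_combination mul_le_mul_of_nonneg_left ih hb + hmono

theorem add_div_le_mul_one_sub_pow {x z : ℝ} (hx : x ≤ 1) (hz : z ≤ 1) (k : ℕ) :
    z * (1 - z) ^ k + ((1 - z) ^ (k + 1) - (1 - x) ^ (k + 1)) / (k + 1) ≤ x * (1 - z) ^ k := by
  have h := pow_succ_sub_pow_succ_le (sub_nonneg.2 hx) (sub_nonneg.2 hz) k
  rw [← le_sub_iff_add_le', div_le_iff₀ (by positivity)]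
  linear_combination h

theorem Continuous.integrable_of_ae_mem_compact {X E : Type*} [TopologicalSpace X]
    [T2Space X] [MeasurableSpace X] [OpensMeasurableSpace X] [NormedAddCommGroup E]
    {μ : Measure X} [IsFiniteMeasureOnCompacts μ] {f : X → E} (hf : Continuous f) {K : Set X}
    (hK : IsCompact K) (hμK : ∀ᵐ x ∂μ, x ∈ K) : Integrable f μ := by
  rw [← Measure.restrict_eq_self_of_ae_mem hμK]
  exact hf.continuousOn.integrableOn_compact hK

theorem integral_snd_mul_one_sub_pow_le_integral_fst_mul {μ : Measure (ℝ × ℝ)}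
    [IsFiniteMeasure μ] (hμ : μ.map Prod.fst = μ.map Prod.snd)
    (hsupp : ∀ᵐ p ∂μ, p ∈ Icc (0 : ℝ) 1 ×ˢ Icc (0 : ℝ) 1) (k : ℕ) :
    ∫ p, p.2 * (1 - p.2) ^ k ∂μ ≤ ∫ p, p.1 * (1 - p.2) ^ k ∂μ := by
  have hint {f : ℝ × ℝ → ℝ} (hf : Continuous f) : Integrable f μ :=
    hf.integrable_of_ae_mem_compact (isCompact_Icc.prod isCompact_Icc) hsupp
  have hpow : ∫ p, (1 - p.1) ^ (k + 1) ∂μ = ∫ p, (1 - p.2) ^ (k + 1) ∂μ := by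
    have hg : Continuous fun t : ℝ => (1 - t) ^ (k + 1) := by fun_prop
    rw [← integral_map measurable_fst.aemeasurable hg.aestronglyMeasurable, hμ,
      integral_map measurable_snd.aemeasurable hg.aestronglyMeasurable]
  calc ∫ p, p.2 * (1 - p.2) ^ k ∂μ
      = ∫ p, (p.2 * (1 - p.2) ^ k
          + ((1 - p.2) ^ (k + 1) - (1 - p.1) ^ (k + 1)) / (k + 1)) ∂μ := by
        rw [integral_add (hint (by fun_prop)) (hint (by fun_prop)), integral_div,
          integral_sub (hint (by fun_prop)) (hint (by fun_prop)), hpow, sub_self, zero_div,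
          add_zero]
    _ ≤ ∫ p, p.1 * (1 - p.2) ^ k ∂μ := by
        refine integral_mono_ae (hint (by fun_prop)) (hint (by fun_prop)) ?_
        filter_upwards [hsupp] with p hp
        exact add_div_le_mul_one_sub_pow hp.1.2 hp.2.2 k

theorem intervalIntegral_mul_one_sub_pow (k : ℕ) :
    ∫ x in (0 : ℝ)..1, x * (1 - x) ^ k = 1 / ((k + 1) * (k + 2)) := by
  have hsub := intervalIntegral.integral_comp_sub_left (fun u : ℝ => (1 - u) * u ^ k)
    (a := 0) (b := 1) (1 : ℝ)
  simp only [sub_sub_cancel, sub_self, sub_zero] at hsub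
  rw [hsub]
  simp only [sub_mul, one_mul, ← pow_succ']
  rw [intervalIntegral.integral_sub ((continuous_pow _).intervalIntegrable _ _)
    ((continuous_pow _).intervalIntegrable _ _), integral_pow, integral_pow]
  push_cast
  field_simp
  ring

theorem integral_uniform01 (f : ℝ → ℝ) : ∫ x, f x ∂uniform01 = ∫ x in (0 : ℝ)..1, f x := by
  rw [uniform01, integral_Icc_eq_integral_Ioc, ← intervalIntegral.integral_of_le zero_le_one]

theorem ae_mem_Icc_of_map_eq_uniform01 {α : Type*} [MeasurableSpace α] {μ : Measure α}
    {f : α → ℝ} (hf : AEMeasurable f μ) (h : μ.map f = uniform01) :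
    ∀ᵐ a ∂μ, f a ∈ Icc (0 : ℝ) 1 :=
  ae_of_ae_map hf (h ▸ ae_restrict_mem measurableSet_Icc)

/-- **Strategy-proofness of QPQ.**
Let `n ≥ 2` and let `μ` be any probability measure on `[0,1] × [0,1]` whose two marginals are
both uniform on `[0,1]`. Then `∫ x·(1−z)^{n−1} dμ(x,z) ≥ 1/(n + n²)`, with equality when `μ` is
the law of `(X, X)` for `X` uniform on `[0,1]`. -/
theorem honesty_minimizes_work (n : ℕ) (hn : 2 ≤ n)
    (μ : Measure (ℝ × ℝ)) [IsProbabilityMeasure μ]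
    (hfst : μ.map Prod.fst = uniform01) (hsnd : μ.map Prod.snd = uniform01) :
    1 / ((n : ℝ) + (n : ℝ) ^ 2) ≤ ∫ p, p.1 * (1 - p.2) ^ (n - 1) ∂μ ∧
      (μ = uniform01.map (fun x => (x, x)) →
        ∫ p, p.1 * (1 - p.2) ^ (n - 1) ∂μ = 1 / ((n : ℝ) + (n : ℝ) ^ 2)) := by
  obtain ⟨k, rfl⟩ : ∃ k, n = k + 1 := ⟨n - 1, by omega⟩
  have hdiag : ∫ x, x * (1 - x) ^ k ∂uniform01
      = 1 / (((k + 1 : ℕ) : ℝ) + ((k + 1 : ℕ) : ℝ) ^ 2) := by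
    rw [integral_uniform01, intervalIntegral_mul_one_sub_pow]
    push_cast
    ring
  rw [Nat.add_sub_cancel]
  constructor
  · have hsupp : ∀ᵐ p ∂μ, p ∈ Icc (0 : ℝ) 1 ×ˢ Icc (0 : ℝ) 1 :=
      (ae_mem_Icc_of_map_eq_uniform01 measurable_fst.aemeasurable hfst).and
        (ae_mem_Icc_of_map_eq_uniform01 measurable_snd.aemeasurable hsnd)
    have hsnd_int : ∫ p, p.2 * (1 - p.2) ^ k ∂μ = ∫ z, z * (1 - z) ^ k ∂uniform01 := by
      rw [← hsnd, integral_map measurable_snd.aemeasurable (by fun_prop)]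
    rw [← hdiag, ← hsnd_int]
    exact integral_snd_mul_one_sub_pow_le_integral_fst_mul (hfst.trans hsnd.symm) hsupp k
  · rintro rfl
    rw [integral_map (by fun_prop) (by fun_prop)]
    exact hdiag
end

section
/- Let n ≥ 2 and let X, Z, Y₁, …, Y_{n-1} be independent random variables, each uniformly distributed on [0,1], with Y = min(Y₁, …, Y_{n-1}). Then E[X · 1{X > Y}] > E[X · 1{Z > Y}]; that is, 1/2 − 1/(n + n²) > 1/2 − 1/(2n). -/
/-!
Let `F(x) = P(min Y < x) = 1 - (1 - x)^(n-1)` on `[0, 1]`. Since `X` is independent of `min Y`,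
`E[X·1{X > Y}] = ∫₀¹ x F(x) dx = 1/2 - 1/(n + n²)`. A regenerated value `Z` decouples the event
`{Z > Y}` from `X`, so `E[X·1{Z > Y}] = E[X]·P(Z > Y) = (1/2) ∫₀¹ F = 1/2 - 1/(2n)`. The comparison
is `2n < n + n²`, i.e. `n > 1`.
-/

open MeasureTheory ProbabilityTheory

open Set

lemma integral_uniform01_of_eqOn {f g : ℝ → ℝ} (h : EqOn f g (Icc 0 1)) :
    ∫ x, f x ∂uniform01 = ∫ x in (0:ℝ)..1, g x := by
  rw [intervalIntegral.integral_of_le zero_le_one, ← integral_Icc_eq_integral_Ioc]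
  exact setIntegral_congr_fun measurableSet_Icc h

lemma measureReal_uniform01_Ici {x : ℝ} (hx : x ∈ Icc (0:ℝ) 1) :
    uniform01.real (Ici x) = 1 - x := by
  have : Ici x ∩ Icc 0 1 = Icc x 1 := by
    ext t
    simp only [mem_inter_iff, mem_Ici, mem_Icc]
    exact ⟨fun h => ⟨h.1, h.2.2⟩, fun h => ⟨h.1, hx.1.trans h.1, h.2⟩⟩
  rw [uniform01, measureReal_restrict_apply measurableSet_Ici, this,
    Real.volume_real_Icc_of_le hx.2]

lemma integral_one_sub_pow (m : ℕ) : ∫ x in (0:ℝ)..1, (1 - x) ^ m = 1 / (m + 1) := by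
  simp [intervalIntegral.integral_comp_sub_left (fun t : ℝ => t ^ m) 1]

lemma integral_mul_one_sub_pow (m : ℕ) :
    ∫ x in (0:ℝ)..1, x * (1 - x) ^ m = 1 / (m + 1) - 1 / (m + 2) := by
  have h := intervalIntegral.integral_comp_sub_left (fun t : ℝ => (1 - t) * t ^ m)
    (a := 0) (b := 1) 1
  simp only [sub_sub_cancel, sub_zero, sub_self] at h
  simp [h, sub_mul, ← pow_succ', integral_pow]
  ring

lemma one_div_add_sq_lt_one_div_two_mul {x : ℝ} (hx : 1 < x) : 1 / (x + x ^ 2) < 1 / (2 * x) :=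
  one_div_lt_one_div_of_lt (by positivity) (by nlinarith)

namespace ProbabilityTheory

variable {Ω : Type*} [MeasurableSpace Ω] {P : Measure Ω}

lemma iIndepFun.indepFun_comp_finset {ι β γ : Type*} [MeasurableSpace β] [MeasurableSpace γ]
    {f : ι → Ω → β} (h : iIndepFun f P) (hf : ∀ i, Measurable (f i)) {i : ι} {S : Finset ι}
    (hi : i ∉ S) {φ : (S → β) → γ} (hφ : Measurable φ) :
    IndepFun (f i) (fun ω => φ (fun j : S => f j ω)) P :=
  (h.indepFun_finset {i} S (Finset.disjoint_singleton_left.2 hi) hf).comp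
    (measurable_pi_apply (⟨i, Finset.mem_singleton_self i⟩ : ({i} : Finset ι))) hφ

lemma iIndepFun.measure_iInf_preimage_Ici_eq_prod {ι : Type*} [Fintype ι] [Nonempty ι]
    {Y : ι → Ω → ℝ} (h : iIndepFun Y P) (x : ℝ) :
    P ((fun ω => ⨅ i, Y i ω) ⁻¹' Ici x) = ∏ i, P (Y i ⁻¹' Ici x) := by
  have : (fun ω => ⨅ i, Y i ω) ⁻¹' Ici x = ⋂ i, Y i ⁻¹' Ici x := by
    ext ω
    simp [le_ciInf_iff (finite_range _).bddBelow]
  rw [this]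
  exact h.meas_iInter fun i => ⟨Ici x, measurableSet_Ici, rfl⟩

variable [IsProbabilityMeasure P]

lemma measureReal_map_iInf_Iio_of_uniform01 {ι : Type*} [Fintype ι] [Nonempty ι]
    {Y : ι → Ω → ℝ} (h : iIndepFun Y P) (hY : ∀ i, Measurable (Y i))
    (hunif : ∀ i, P.map (Y i) = uniform01) {x : ℝ} (hx : x ∈ Icc (0:ℝ) 1) :
    (P.map fun ω => ⨅ i, Y i ω).real (Iio x) = 1 - (1 - x) ^ Fintype.card ι := by
  have hM : Measurable fun ω => ⨅ i, Y i ω := .iInf hY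
  have : IsProbabilityMeasure (P.map fun ω => ⨅ i, Y i ω) :=
    Measure.isProbabilityMeasure_map hM.aemeasurable
  have hYi : ∀ i, P.real (Y i ⁻¹' Ici x) = 1 - x := fun i => by
    rw [← measureReal_uniform01_Ici hx, ← hunif i, map_measureReal_apply (hY i) measurableSet_Ici]
  rw [← compl_Ici, probReal_compl_eq_one_sub measurableSet_Ici,
    map_measureReal_apply hM measurableSet_Ici, measureReal_def,
    h.measure_iInf_preimage_Ici_eq_prod, ENNReal.toReal_prod]
  simp only [← measureReal_def, hYi, Finset.prod_const, Finset.card_univ]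

lemma IndepFun.integral_ite_lt_eq_integral_mul_cdf {U V : Ω → ℝ} (hU : Measurable U)
    (hV : Measurable V) (hind : IndepFun U V P) {c : ℝ → ℝ} (hcm : Measurable c)
    (hc : Integrable c (P.map U)) :
    ∫ ω, (if V ω < U ω then c (U ω) else 0) ∂P =
      ∫ x, c x * (P.map V).real (Iio x) ∂(P.map U) := by
  have : IsProbabilityMeasure (P.map V) := Measure.isProbabilityMeasure_map hV.aemeasurable
  set f : ℝ × ℝ → ℝ := fun p => if p.2 < p.1 then c p.1 else 0
  have hf : Measurable f :=
    Measurable.ite (measurableSet_lt measurable_snd measurable_fst) (hcm.comp measurable_fst)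
      measurable_const
  have hfint : Integrable f ((P.map U).prod (P.map V)) :=
    (hc.comp_fst (P.map V)).mono hf.aestronglyMeasurable
      (ae_of_all _ fun p => by simp only [f]; split_ifs <;> simp)
  have hsection : ∀ x, ∫ y, f (x, y) ∂(P.map V) = c x * (P.map V).real (Iio x) := fun x => by
    have : (fun y => f (x, y)) = (Iio x).indicator fun _ => c x := by
      ext y
      simp [f, indicator_apply]
    rw [this, integral_indicator measurableSet_Iio, setIntegral_const, smul_eq_mul, mul_comm]
  calc ∫ ω, (if V ω < U ω then c (U ω) else 0) ∂P
      = ∫ p, f p ∂(P.map fun ω => (U ω, V ω)) :=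
        (integral_map (hU.prodMk hV).aemeasurable hf.aestronglyMeasurable).symm
    _ = ∫ p, f p ∂((P.map U).prod (P.map V)) := by
        rw [(indepFun_iff_map_prod_eq_prod_map_map hU.aemeasurable hV.aemeasurable).1 hind]
    _ = _ := by
        rw [integral_prod f hfint]
        simp_rw [hsection]

lemma integral_ite_lt_self_of_cdf {m : ℕ} {U M : Ω → ℝ} (hU : Measurable U) (hM : Measurable M)
    (hUunif : P.map U = uniform01) (hind : IndepFun U M P)
    (hF : ∀ x ∈ Icc (0:ℝ) 1, (P.map M).real (Iio x) = 1 - (1 - x) ^ m) :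
    ∫ ω, (if M ω < U ω then U ω else 0) ∂P = 1 / 2 - 1 / ((m + 1) + (m + 1) ^ 2) := by
  have h := hind.integral_ite_lt_eq_integral_mul_cdf hU hM (c := fun x => x) measurable_id
    (by rw [hUunif]; exact continuous_id.integrableOn_Icc)
  rw [h, hUunif, integral_uniform01_of_eqOn (g := fun x => x - x * (1 - x) ^ m)
    fun x hx => by simp only [hF x hx]; ring, intervalIntegral.integral_sub, integral_id,
    integral_mul_one_sub_pow]
  · field_simp
    ring
  all_goals exact (by fun_prop : Continuous _).intervalIntegrable _ _

lemma integral_ite_lt_of_indepFun_prod {m : ℕ} {U W M : Ω → ℝ} (hU : Measurable U)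
    (hW : Measurable W) (hM : Measurable M) (hUunif : P.map U = uniform01)
    (hWunif : P.map W = uniform01) (hUWM : IndepFun U (fun ω => (W ω, M ω)) P)
    (hWM : IndepFun W M P) (hF : ∀ x ∈ Icc (0:ℝ) 1, (P.map M).real (Iio x) = 1 - (1 - x) ^ m) :
    ∫ ω, (if M ω < W ω then U ω else 0) ∂P = 1 / 2 - 1 / (2 * (m + 1)) := by
  set I : Ω → ℝ := fun ω => if M ω < W ω then 1 else 0
  have hI : Measurable I :=
    Measurable.ite (measurableSet_lt hM hW) measurable_const measurable_const
  have hUI : IndepFun U I P :=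
    hUWM.comp measurable_id (Measurable.ite (measurableSet_lt measurable_snd measurable_fst)
      measurable_const measurable_const :
        Measurable fun p : ℝ × ℝ => if p.2 < p.1 then (1:ℝ) else 0)
  have hEU : ∫ ω, U ω ∂P = 1 / 2 := by
    rw [show ∫ ω, U ω ∂P = ∫ x, x ∂(P.map U) from
      (integral_map hU.aemeasurable aestronglyMeasurable_id).symm, hUunif,
      integral_uniform01_of_eqOn (eqOn_refl _ _), integral_id]
    norm_num
  have hEI : ∫ ω, I ω ∂P = 1 - 1 / (m + 1) := by
    have h := hWM.integral_ite_lt_eq_integral_mul_cdf hW hM (c := fun _ => 1) measurable_const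
      (integrable_const 1)
    rw [h, hWunif, integral_uniform01_of_eqOn (g := fun x => 1 - (1 - x) ^ m)
      fun x hx => by simp only [hF x hx, one_mul], intervalIntegral.integral_sub,
      integral_one_sub_pow]
    · simp
    all_goals exact (by fun_prop : Continuous _).intervalIntegrable _ _
  calc ∫ ω, (if M ω < W ω then U ω else 0) ∂P = ∫ ω, U ω * I ω ∂P := by simp [I]
    _ = 1 / 2 - 1 / (2 * (m + 1)) := by
      rw [hUI.integral_fun_mul_eq_mul_integral hU.aestronglyMeasurable hI.aestronglyMeasurable,
        hEU, hEI]
      field_simp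

end ProbabilityTheory

/-- **Honesty yields strictly higher expected utility (QPQ is strategy-proof).**
Let `n ≥ 2` and let `X, Z, Y₁, …, Y_{n-1}` be independent random variables, each uniform on
`[0,1]`, with `Y = min(Y₁, …, Y_{n-1})`. Then `E[X · 1{X > Y}] > E[X · 1{Z > Y}]`; that is,
`1/2 − 1/(n + n²) > 1/2 − 1/(2n)`. -/
theorem honesty_higher_utility {Ω : Type*} [MeasurableSpace Ω] (P : Measure Ω)
    [IsProbabilityMeasure P]
    (n : ℕ) (hn : 2 ≤ n)
    (X Z : Ω → ℝ) (Y : Fin (n - 1) → Ω → ℝ)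
    (hX : Measurable X) (hZ : Measurable Z) (hY : ∀ i, Measurable (Y i))
    (hindep : iIndepFun
      (fun s : Bool ⊕ Fin (n - 1) => Sum.elim (fun b : Bool => cond b X Z) Y s) P)
    (hXunif : P.map X = uniform01) (hZunif : P.map Z = uniform01)
    (hYunif : ∀ i, P.map (Y i) = uniform01) :
    (∫ ω, (if X ω > ⨅ i, Y i ω then X ω else 0) ∂P)
        > ∫ ω, (if Z ω > ⨅ i, Y i ω then X ω else 0) ∂P ∧
      (1 / 2 - 1 / ((n : ℝ) + (n : ℝ) ^ 2)) > 1 / 2 - 1 / (2 * (n : ℝ)) := by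
  have : Nonempty (Fin (n - 1)) := ⟨⟨0, by omega⟩⟩
  have hcast : ((n - 1 : ℕ) : ℝ) + 1 = n := by rw [Nat.cast_sub (by omega)]; ring
  have hmeas : ∀ s, Measurable (Sum.elim (fun b : Bool => cond b X Z) Y s) := by
    rintro ((_ | _) | i) <;> simp [*]
  have hM : Measurable fun ω => ⨅ i, Y i ω := .iInf hY
  have hF : ∀ x ∈ Icc (0:ℝ) 1,
      (P.map fun ω => ⨅ i, Y i ω).real (Iio x) = 1 - (1 - x) ^ (n - 1) := fun x hx => by
    simpa using measureReal_map_iInf_Iio_of_uniform01 (hindep.precomp Sum.inr_injective) hY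
      hYunif hx
  have hXZM : IndepFun X (fun ω => (Z ω, ⨅ i, Y i ω)) P :=
    hindep.indepFun_comp_finset hmeas (i := .inl true)
      (S := insert (.inl false) (Finset.univ.map .inr)) (by simp)
      (φ := fun v => (v ⟨.inl false, by simp⟩, ⨅ j, v ⟨.inr j, by simp⟩)) (by fun_prop)
  have hZM : IndepFun Z (fun ω => ⨅ i, Y i ω) P :=
    hindep.indepFun_comp_finset hmeas (i := .inl false) (S := Finset.univ.map .inr) (by simp)
      (φ := fun v => ⨅ j, v ⟨.inr j, by simp⟩) (by fun_prop)
  have hcmp : 1 / 2 - 1 / ((n : ℝ) + (n : ℝ) ^ 2) > 1 / 2 - 1 / (2 * (n : ℝ)) := by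
    linarith [one_div_add_sq_lt_one_div_two_mul (x := n) (by exact_mod_cast hn)]
  refine ⟨?_, hcmp⟩
  simp only [gt_iff_lt]
  rwa [integral_ite_lt_self_of_cdf hX hM hXunif (hXZM.comp measurable_id measurable_snd) hF,
    integral_ite_lt_of_indepFun_prod hX hZ hM hXunif hZunif hXZM hZM hF, hcast]
end
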